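/- arXiv:math/0511437 — 2 statements merged into one kernel-verified Lean document; each statement's English description precedes it below -/
import Mathlib

section
/- The space U of isometry classes of compact ultrametric spaces, equipped with the ultrametric Gromov–Hausdorff distance ρ_GHu, is not separable: there exists an uncountable family of compact ultrametric spaces that are pairwise at ρ_GHu-distance at least 1/4. -/
/-!
In an ultrametric space the triangle inequality through the chain `p, a, b, q` gives
`dist p q ≤ max (dist p a) (dist a b) (dist b q)`, so a set within Hausdorff distance `h` of a
set `S` has diameter at most `max h (diam S)`. Hence two spaces of different diameters are at
ultrametric Gromov–Hausdorff distance at least the larger diameter, and the two-point spaces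
`X_c`, `c ∈ [1/2, 1]`, form an uncountable `1/2`-separated family.
-/

/-- The ultrametric Gromov–Hausdorff distance: infimum of Hausdorff distances between
isometric copies of `X` and `Y` inside a common ultrametric space. -/
noncomputable def GHuDist (X Y : Type*) [MetricSpace X] [MetricSpace Y] : ℝ :=
  sInf { r : ℝ | ∃ (Z : Type) (_ : MetricSpace Z), IsUltrametricDist Z ∧
    ∃ (i : X → Z) (j : Y → Z), Isometry i ∧ Isometry j ∧
      Metric.hausdorffDist (Set.range i) (Set.range j) = r }

open Bornology Metric Set

theorem LipschitzWith.isBounded_range {α β : Type*} [PseudoMetricSpace α] [PseudoMetricSpace β]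
    [BoundedSpace α] {K : NNReal} {f : α → β} (hf : LipschitzWith K f) : IsBounded (range f) :=
  image_univ ▸ hf.isBounded_image (isBounded_univ.mpr ‹_›)

instance Prod.instIsUltrametricDist {X Y : Type*} [PseudoMetricSpace X] [PseudoMetricSpace Y]
    [IsUltrametricDist X] [IsUltrametricDist Y] : IsUltrametricDist (X × Y) where
  dist_triangle_max x y z := by
    simp only [Prod.dist_eq]
    refine max_le ?_ ?_
    · exact (IsUltrametricDist.dist_triangle_max x.1 y.1 z.1).trans
        (max_le_max (le_max_left _ _) (le_max_left _ _))
    · exact (IsUltrametricDist.dist_triangle_max x.2 y.2 z.2).trans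
        (max_le_max (le_max_right _ _) (le_max_right _ _))

theorem isometry_prodMk_right {X Y : Type*} [PseudoMetricSpace X] [PseudoMetricSpace Y] (y : Y) :
    Isometry fun x : X ↦ (x, y) :=
  Isometry.of_dist_eq fun _ _ ↦ by simp [Prod.dist_eq]

theorem isometry_prodMk_left {X Y : Type*} [PseudoMetricSpace X] [PseudoMetricSpace Y] (x : X) :
    Isometry (Prod.mk x : Y → X × Y) :=
  Isometry.of_dist_eq fun _ _ ↦ by simp [Prod.dist_eq]

namespace IsUltrametricDist

variable {Z : Type*} [PseudoMetricSpace Z] [IsUltrametricDist Z]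

theorem dist_le_max_dist_dist_dist (p a b q : Z) :
    dist p q ≤ max (dist p a) (max (dist a b) (dist b q)) :=
  (dist_triangle_max p a q).trans (max_le_max le_rfl (dist_triangle_max a b q))

theorem diam_le_max_hausdorffDist_diam {S T : Set Z} (hS : IsBounded S)
    (hST : hausdorffEDist S T ≠ ⊤) :
    diam T ≤ max (hausdorffDist S T) (diam S) := by
  refine diam_le_of_forall_dist_le (le_max_of_le_right diam_nonneg) fun p hp q hq ↦ ?_
  refine le_of_forall_pos_le_add fun ε hε ↦ ?_
  have hclose : ∀ x ∈ T, ∃ a ∈ S, dist a x < hausdorffDist S T + ε := fun x hx ↦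
    exists_dist_lt_of_hausdorffDist_lt' hx (lt_add_of_pos_right _ hε) hST
  obtain ⟨a, ha, hap⟩ := hclose p hp
  obtain ⟨b, hb, hbq⟩ := hclose q hq
  calc dist p q ≤ max (dist p a) (max (dist a b) (dist b q)) := dist_le_max_dist_dist_dist p a b q
    _ ≤ max (hausdorffDist S T + ε) (diam S) := by
      rw [dist_comm p a]
      exact max_le (le_max_of_le_left hap.le)
        (max_le (le_max_of_le_right (dist_le_diam_of_mem hS ha hb)) (le_max_of_le_left hbq.le))
    _ ≤ max (hausdorffDist S T) (diam S) + ε :=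
      max_le (add_le_add (le_max_left _ _) le_rfl)
        ((le_max_right _ _).trans (le_add_of_nonneg_right hε.le))

end IsUltrametricDist

section GHuDist

variable {X Y : Type} [MetricSpace X] [MetricSpace Y]

theorem max_diam_le_GHuDist [IsUltrametricDist X] [IsUltrametricDist Y]
    [BoundedSpace X] [BoundedSpace Y] [Nonempty X] [Nonempty Y]
    (hne : diam (univ : Set X) ≠ diam (univ : Set Y)) :
    max (diam (univ : Set X)) (diam (univ : Set Y)) ≤ GHuDist X Y := by
  refine le_csInf ?_ ?_
  · exact ⟨_, X × Y, inferInstance, inferInstance, _, _,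
      isometry_prodMk_right (Classical.arbitrary Y), isometry_prodMk_left (Classical.arbitrary X),
      rfl⟩
  · rintro r ⟨Z, _, _, i, j, hi, hj, rfl⟩
    have hbi := hi.lipschitz.isBounded_range
    have hbj := hj.lipschitz.isBounded_range
    have hfin : hausdorffEDist (range i) (range j) ≠ ⊤ :=
      hausdorffEDist_ne_top_of_nonempty_of_bounded (range_nonempty i) (range_nonempty j) hbi hbj
    have hY := IsUltrametricDist.diam_le_max_hausdorffDist_diam hbi hfin
    have hX := IsUltrametricDist.diam_le_max_hausdorffDist_diam hbj
      (hausdorffEDist_comm (s := range i) ▸ hfin)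
    rw [hi.diam_range, hj.diam_range] at hY hX
    rw [hausdorffDist_comm] at hX
    rcases hne.lt_or_gt with hlt | hlt
    · rw [max_eq_right hlt.le]
      exact (le_max_iff.mp hY).resolve_right hlt.not_ge
    · rw [max_eq_left hlt.le]
      exact (le_max_iff.mp hX).resolve_right hlt.not_ge

end GHuDist

/-- The two-point space `X_c`, whose points are at distance `c`. -/
def TwoPt (_c : ℝ) : Type := Bool

namespace TwoPt

variable (c : ℝ)

instance : Finite (TwoPt c) := inferInstanceAs (Finite Bool)
instance : Nonempty (TwoPt c) := inferInstanceAs (Nonempty Bool)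
instance : DecidableEq (TwoPt c) := inferInstanceAs (DecidableEq Bool)

variable [hc : Fact (0 < c)]

noncomputable instance : MetricSpace (TwoPt c) where
  dist x y := if x = y then 0 else c
  dist_self x := if_pos rfl
  dist_comm x y := by simp only [eq_comm]
  dist_triangle x y z := by
    split_ifs <;> simp_all [hc.out.le]
  eq_of_dist_eq_zero {x y} h := by
    by_contra hxy
    exact hc.out.ne' ((if_neg hxy).symm.trans h)

theorem dist_eq (x y : TwoPt c) : dist x y = if x = y then 0 else c := rfl

instance : IsUltrametricDist (TwoPt c) where
  dist_triangle_max x y z := by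
    simp only [dist_eq]
    split_ifs <;> simp_all [hc.out.le]

theorem diam_univ : diam (univ : Set (TwoPt c)) = c := by
  refine le_antisymm (diam_le_of_forall_dist_le hc.out.le fun x _ y _ ↦ ?_) ?_
  · rw [dist_eq]
    split_ifs
    exacts [hc.out.le, le_rfl]
  · have := dist_le_diam_of_mem (s := (univ : Set (TwoPt c))) (x := true) (y := false)
      finite_univ.isBounded trivial trivial
    exact (if_neg Bool.true_eq_false.mp).symm.trans_le this

end TwoPt

/-- The space of compact ultrametric spaces is not separable: there is an uncountable
family of compact ultrametric spaces which are pairwise at ultrametric Gromov–Hausdorff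
distance at least 1/4. -/
theorem GHu_not_separable :
    ∃ (ι : Type) (F : ι → Type) (m : ∀ i, MetricSpace (F i)),
      ¬ Countable ι ∧
      (∀ i, letI := m i; CompactSpace (F i) ∧ Nonempty (F i) ∧ IsUltrametricDist (F i)) ∧
      (∀ i j, i ≠ j → letI := m i; letI := m j; 1/4 ≤ GHuDist (F i) (F j)) := by
  have hpos : ∀ c : Icc (1/2 : ℝ) 1, Fact (0 < (c : ℝ)) := fun c ↦ ⟨by linarith [c.2.1]⟩
  refine ⟨Icc (1/2 : ℝ) 1, fun c ↦ TwoPt c, fun c ↦ inferInstance, ?_,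
    fun c ↦ ⟨inferInstance, inferInstance, inferInstance⟩, fun c₁ c₂ hne ↦ ?_⟩
  · rw [← Cardinal.mk_le_aleph0_iff, Cardinal.mk_Icc_real (by norm_num), not_le]
    exact Cardinal.aleph0_lt_continuum
  · have hdiam := max_diam_le_GHuDist (X := TwoPt c₁) (Y := TwoPt c₂)
      (by rwa [TwoPt.diam_univ, TwoPt.diam_univ, Ne, ← Subtype.ext_iff])
    rw [TwoPt.diam_univ, TwoPt.diam_univ] at hdiam
    linarith [le_max_left (c₁ : ℝ) c₂, c₁.2.1]
end

section
/- The space U of isometry classes of compact ultrametric spaces with the ultrametric Gromov–Hausdorff distance ρ_GHu is a complete metric space. -/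
open Metric Set Filter Topology TopologicalSpace

noncomputable section

instance IsUltrametricDist.separationQuotient {α : Type*} [PseudoMetricSpace α]
    [IsUltrametricDist α] : IsUltrametricDist (SeparationQuotient α) :=
  ⟨SeparationQuotient.surjective_mk.forall₃.2 fun x y z => by
    simpa only [SeparationQuotient.dist_mk] using dist_triangle_max x y z⟩

instance IsUltrametricDist.completion {α : Type*} [PseudoMetricSpace α] [IsUltrametricDist α] :
    IsUltrametricDist (UniformSpace.Completion α) := by
  refine ⟨fun x y z => UniformSpace.Completion.induction_on₃ x y z ?_ fun a b c => ?_⟩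
  · refine isClosed_le ?_ (Continuous.max ?_ ?_) <;>
      apply_rules [UniformSpace.Completion.continuous_dist, Continuous.fst, Continuous.snd,
        continuous_id, Continuous.comp]
  · simpa only [UniformSpace.Completion.dist_eq] using dist_triangle_max a b c

instance IsUltrametricDist.inductiveLimit {X : ℕ → Type*} [∀ n, MetricSpace (X n)]
    [∀ n, IsUltrametricDist (X n)] {f : ∀ n, X n → X (n + 1)} {I : ∀ n, Isometry (f n)} :
    IsUltrametricDist (InductiveLimit I) := by
  let := inductivePremetric I
  have : IsUltrametricDist (Σ n, X n) := by
    refine ⟨fun x y z => ?_⟩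
    have hx : x.1 ≤ max (max x.1 y.1) z.1 := le_max_of_le_left (le_max_left _ _)
    have hy : y.1 ≤ max (max x.1 y.1) z.1 := le_max_of_le_left (le_max_right _ _)
    have hz : z.1 ≤ max (max x.1 y.1) z.1 := le_max_right _ _
    change inductiveLimitDist f x z ≤ max (inductiveLimitDist f x y) (inductiveLimitDist f y z)
    rw [inductiveLimitDist_eq_dist I x z _ hx hz, inductiveLimitDist_eq_dist I x y _ hx hy,
      inductiveLimitDist_eq_dist I y z _ hy hz]
    exact dist_triangle_max _ _ _
  exact IsUltrametricDist.separationQuotient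

theorem Isometry.hausdorffDist_range_comp {α β γ δ : Type*} [PseudoMetricSpace α]
    [PseudoMetricSpace β] {Φ : α → β} (hΦ : Isometry Φ) (f : γ → α) (g : δ → α) :
    hausdorffDist (range (Φ ∘ f)) (range (Φ ∘ g)) = hausdorffDist (range f) (range g) := by
  rw [range_comp, range_comp, hausdorffDist_image hΦ]

section UltrametricGlue

variable {Y Z₁ Z₂ : Type*} [PseudoMetricSpace Z₁] [PseudoMetricSpace Z₂]
  (φ₁ : Y → Z₁) (φ₂ : Y → Z₂)

def ultraGlueCrossDist (a : Z₁) (b : Z₂) : ℝ := ⨅ y, max (dist a (φ₁ y)) (dist (φ₂ y) b)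

theorem ultraGlueCrossDist_le (a : Z₁) (b : Z₂) (y : Y) :
    ultraGlueCrossDist φ₁ φ₂ a b ≤ max (dist a (φ₁ y)) (dist (φ₂ y) b) :=
  ciInf_le ⟨0, by rintro r ⟨y, rfl⟩; exact le_max_of_le_left dist_nonneg⟩ y

theorem ultraGlueCrossDist_comm (a : Z₁) (b : Z₂) :
    ultraGlueCrossDist φ₁ φ₂ a b = ultraGlueCrossDist φ₂ φ₁ b a := by
  simp only [ultraGlueCrossDist, dist_comm a, dist_comm _ b, max_comm]

theorem exists_lt_of_ultraGlueCrossDist_lt [Nonempty Y] {a : Z₁} {b : Z₂} {r : ℝ}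
    (h : ultraGlueCrossDist φ₁ φ₂ a b < r) :
    ∃ y, dist a (φ₁ y) < r ∧ dist (φ₂ y) b < r := by
  obtain ⟨y, hy⟩ := exists_lt_of_ciInf_lt h
  exact ⟨y, max_lt_iff.1 hy⟩

theorem ultraGlueCrossDist_le_max_left [Nonempty Y] [IsUltrametricDist Z₁] (a c : Z₁) (b : Z₂) :
    ultraGlueCrossDist φ₁ φ₂ a b ≤ max (dist a c) (ultraGlueCrossDist φ₁ φ₂ c b) := by
  by_contra! h
  obtain ⟨y, hcy, hyb⟩ := exists_lt_of_ultraGlueCrossDist_lt φ₁ φ₂ (le_max_right _ _ |>.trans_lt h)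
  have hay : dist a (φ₁ y) < ultraGlueCrossDist φ₁ φ₂ a b :=
    (dist_triangle_max a c _).trans_lt (max_lt ((le_max_left _ _).trans_lt h) hcy)
  exact (ultraGlueCrossDist_le φ₁ φ₂ a b y).not_gt (max_lt hay hyb)

theorem dist_le_max_ultraGlueCrossDist [PseudoMetricSpace Y] [Nonempty Y] [IsUltrametricDist Z₁]
    [IsUltrametricDist Z₂] (h₁ : Isometry φ₁) (h₂ : Isometry φ₂) (a b : Z₁) (c : Z₂) :
    dist a b ≤ max (ultraGlueCrossDist φ₁ φ₂ a c) (ultraGlueCrossDist φ₁ φ₂ b c) := by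
  by_contra! h
  obtain ⟨y, hay, hyc⟩ := exists_lt_of_ultraGlueCrossDist_lt φ₁ φ₂ (le_max_left _ _ |>.trans_lt h)
  obtain ⟨y', hby', hy'c⟩ :=
    exists_lt_of_ultraGlueCrossDist_lt φ₁ φ₂ (le_max_right _ _ |>.trans_lt h)
  have hyy' : dist (φ₁ y) (φ₁ y') < dist a b := by
    rw [h₁.dist_eq, ← h₂.dist_eq]
    exact (dist_triangle_max _ c _).trans_lt (max_lt hyc (dist_comm c _ ▸ hy'c))
  have := (dist_triangle_max a (φ₁ y) b).trans
    (max_le_max le_rfl (dist_triangle_max (φ₁ y) (φ₁ y') b))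
  exact this.not_gt (max_lt hay (max_lt hyy' (dist_comm b _ ▸ hby')))

def ultraGlueDist : Z₁ ⊕ Z₂ → Z₁ ⊕ Z₂ → ℝ
  | .inl a, .inl b => dist a b
  | .inr a, .inr b => dist a b
  | .inl a, .inr b => ultraGlueCrossDist φ₁ φ₂ a b
  | .inr a, .inl b => ultraGlueCrossDist φ₁ φ₂ b a

theorem ultraGlueDist_comm : ∀ p q, ultraGlueDist φ₁ φ₂ p q = ultraGlueDist φ₁ φ₂ q p
  | .inl _, .inl _ | .inr _, .inr _ => dist_comm _ _
  | .inl _, .inr _ | .inr _, .inl _ => rfl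

theorem ultraGlueDist_triangle_max [PseudoMetricSpace Y] [Nonempty Y] [IsUltrametricDist Z₁]
    [IsUltrametricDist Z₂] (h₁ : Isometry φ₁) (h₂ : Isometry φ₂) :
    ∀ p q r, ultraGlueDist φ₁ φ₂ p r ≤ max (ultraGlueDist φ₁ φ₂ p q) (ultraGlueDist φ₁ φ₂ q r)
  | .inl a, .inl b, .inl c | .inr a, .inr b, .inr c => dist_triangle_max a b c
  | .inl a, .inl b, .inr c => ultraGlueCrossDist_le_max_left φ₁ φ₂ a b c
  | .inr a, .inr b, .inl c => by
    simpa only [ultraGlueDist, ultraGlueCrossDist_comm φ₁ φ₂ c, max_comm]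
      using ultraGlueCrossDist_le_max_left φ₂ φ₁ a b c
  | .inl a, .inr b, .inl c => dist_le_max_ultraGlueCrossDist φ₁ φ₂ h₁ h₂ a c b
  | .inr a, .inl b, .inr c => by
    simpa only [ultraGlueDist, ultraGlueCrossDist_comm φ₁ φ₂ b]
      using dist_le_max_ultraGlueCrossDist φ₂ φ₁ h₂ h₁ a c b
  | .inl a, .inr b, .inr c => by
    simpa only [ultraGlueDist, ultraGlueCrossDist_comm φ₁ φ₂, max_comm, dist_comm c]
      using ultraGlueCrossDist_le_max_left φ₂ φ₁ c b a
  | .inr a, .inl b, .inl c => by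
    simpa only [ultraGlueDist, max_comm, dist_comm c]
      using ultraGlueCrossDist_le_max_left φ₁ φ₂ c b a

variable [PseudoMetricSpace Y] [Nonempty Y] [IsUltrametricDist Z₁] [IsUltrametricDist Z₂]
  {φ₁ φ₂}

theorem ultraGlueDist_nonneg (h₁ : Isometry φ₁) (h₂ : Isometry φ₂) (p q : Z₁ ⊕ Z₂) :
    0 ≤ ultraGlueDist φ₁ φ₂ p q := by
  have hself : ultraGlueDist φ₁ φ₂ p p = 0 := by cases p <;> exact dist_self _
  simpa only [hself, ultraGlueDist_comm φ₁ φ₂ q, max_self]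
    using ultraGlueDist_triangle_max φ₁ φ₂ h₁ h₂ p q p

/-- The isometry proofs are parameters: the amalgam distance satisfies the triangle inequality
only for isometric `φ₁, φ₂`. -/
def UltraGluePremetric (_ : Isometry φ₁) (_ : Isometry φ₂) : Type _ := Z₁ ⊕ Z₂

instance (h₁ : Isometry φ₁) (h₂ : Isometry φ₂) : PseudoMetricSpace (UltraGluePremetric h₁ h₂) where
  dist := ultraGlueDist φ₁ φ₂
  dist_self p := by cases p <;> exact dist_self _
  dist_comm := ultraGlueDist_comm φ₁ φ₂
  dist_triangle p q r := (ultraGlueDist_triangle_max φ₁ φ₂ h₁ h₂ p q r).trans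
    (max_le_add_of_nonneg (ultraGlueDist_nonneg h₁ h₂ p q) (ultraGlueDist_nonneg h₁ h₂ q r))

instance (h₁ : Isometry φ₁) (h₂ : Isometry φ₂) : IsUltrametricDist (UltraGluePremetric h₁ h₂) :=
  ⟨ultraGlueDist_triangle_max φ₁ φ₂ h₁ h₂⟩

abbrev UltraGlueSpace (h₁ : Isometry φ₁) (h₂ : Isometry φ₂) : Type _ :=
  SeparationQuotient (UltraGluePremetric h₁ h₂)

def toUltraGlueL (h₁ : Isometry φ₁) (h₂ : Isometry φ₂) (a : Z₁) : UltraGlueSpace h₁ h₂ :=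
  SeparationQuotient.mk (Sum.inl a : UltraGluePremetric h₁ h₂)

def toUltraGlueR (h₁ : Isometry φ₁) (h₂ : Isometry φ₂) (b : Z₂) : UltraGlueSpace h₁ h₂ :=
  SeparationQuotient.mk (Sum.inr b : UltraGluePremetric h₁ h₂)

theorem toUltraGlueL_isometry (h₁ : Isometry φ₁) (h₂ : Isometry φ₂) :
    Isometry (toUltraGlueL h₁ h₂) :=
  Isometry.of_dist_eq fun a b =>
    SeparationQuotient.dist_mk (α := UltraGluePremetric h₁ h₂) (.inl a) (.inl b)

theorem toUltraGlueR_isometry (h₁ : Isometry φ₁) (h₂ : Isometry φ₂) :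
    Isometry (toUltraGlueR h₁ h₂) :=
  Isometry.of_dist_eq fun a b =>
    SeparationQuotient.dist_mk (α := UltraGluePremetric h₁ h₂) (.inr a) (.inr b)

theorem toUltraGlue_commute (h₁ : Isometry φ₁) (h₂ : Isometry φ₂) :
    toUltraGlueL h₁ h₂ ∘ φ₁ = toUltraGlueR h₁ h₂ ∘ φ₂ := by
  funext y
  refine dist_le_zero.1 ?_
  calc dist (toUltraGlueL h₁ h₂ (φ₁ y)) (toUltraGlueR h₁ h₂ (φ₂ y))
      = ultraGlueCrossDist φ₁ φ₂ (φ₁ y) (φ₂ y) := SeparationQuotient.dist_mk _ _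
    _ ≤ max (dist (φ₁ y) (φ₁ y)) (dist (φ₂ y) (φ₂ y)) := ultraGlueCrossDist_le φ₁ φ₂ _ _ y
    _ = 0 := by simp

end UltrametricGlue

section GHuDist

theorem GHuDist_le_hausdorffDist {X Y Z : Type} [MetricSpace X] [MetricSpace Y] [MetricSpace Z]
    [IsUltrametricDist Z] {i : X → Z} {j : Y → Z} (hi : Isometry i) (hj : Isometry j) :
    GHuDist X Y ≤ hausdorffDist (range i) (range j) :=
  csInf_le ⟨0, by rintro r ⟨Z, _, _, i, j, -, -, rfl⟩; exact hausdorffDist_nonneg⟩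
    ⟨Z, _, ‹_›, i, j, hi, hj, rfl⟩

theorem GHuDist_nonneg (X Y : Type*) [MetricSpace X] [MetricSpace Y] : 0 ≤ GHuDist X Y :=
  Real.sInf_nonneg <| by rintro r ⟨Z, _, _, i, j, -, -, rfl⟩; exact hausdorffDist_nonneg

variable {X Y : Type} [MetricSpace X] [MetricSpace Y] [IsUltrametricDist X] [IsUltrametricDist Y]
  [Nonempty X] [Nonempty Y]

/-- Glueing `X` and `Y` at a point shows that the infimum defining `GHuDist X Y` is over a
nonempty set. -/
theorem exists_hausdorffDist_lt_of_GHuDist_lt {c : ℝ} (h : GHuDist X Y < c) :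
    ∃ (Z : Type) (_ : MetricSpace Z), IsUltrametricDist Z ∧
      ∃ (i : X → Z) (j : Y → Z), Isometry i ∧ Isometry j ∧
        hausdorffDist (range i) (range j) < c := by
  inhabit X; inhabit Y
  have h₁ : Isometry fun _ : Unit => (default : X) := isometry_subsingleton
  have h₂ : Isometry fun _ : Unit => (default : Y) := isometry_subsingleton
  obtain ⟨r, ⟨Z, _, _, i, j, hi, hj, rfl⟩, hr⟩ := exists_lt_of_csInf_lt
    (by exact ⟨_, UltraGlueSpace h₁ h₂, inferInstance, inferInstance, _, _,
      toUltraGlueL_isometry h₁ h₂, toUltraGlueR_isometry h₁ h₂, rfl⟩) h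
  exact ⟨Z, _, ‹_›, i, j, hi, hj, hr⟩

theorem GHuDist_triangle {W : Type} [MetricSpace W] [IsUltrametricDist W] [Nonempty W]
    [CompactSpace X] [CompactSpace Y] : GHuDist X W ≤ GHuDist X Y + GHuDist Y W := by
  refine le_of_forall_pos_lt_add fun ε hε => ?_
  obtain ⟨Z₁, _, _, i₁, j₁, hi₁, hj₁, hd₁⟩ :=
    exists_hausdorffDist_lt_of_GHuDist_lt (lt_add_of_pos_right (GHuDist X Y) (half_pos hε))
  obtain ⟨Z₂, _, _, i₂, j₂, hi₂, hj₂, hd₂⟩ :=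
    exists_hausdorffDist_lt_of_GHuDist_lt (lt_add_of_pos_right (GHuDist Y W) (half_pos hε))
  have hL := toUltraGlueL_isometry hj₁ hi₂
  have hR := toUltraGlueR_isometry hj₁ hi₂
  have hfin : hausdorffEDist (range (toUltraGlueL hj₁ hi₂ ∘ i₁))
      (range (toUltraGlueL hj₁ hi₂ ∘ j₁)) ≠ ⊤ :=
    hausdorffEDist_ne_top_of_nonempty_of_bounded (range_nonempty _) (range_nonempty _)
      (isCompact_range (hL.comp hi₁).continuous).isBounded
      (isCompact_range (hL.comp hj₁).continuous).isBounded
  calc GHuDist X W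
      ≤ hausdorffDist (range (toUltraGlueL hj₁ hi₂ ∘ i₁)) (range (toUltraGlueR hj₁ hi₂ ∘ j₂)) :=
        GHuDist_le_hausdorffDist (hL.comp hi₁) (hR.comp hj₂)
    _ ≤ hausdorffDist (range (toUltraGlueL hj₁ hi₂ ∘ i₁)) (range (toUltraGlueL hj₁ hi₂ ∘ j₁)) +
        hausdorffDist (range (toUltraGlueR hj₁ hi₂ ∘ i₂)) (range (toUltraGlueR hj₁ hi₂ ∘ j₂)) := by
        rw [← toUltraGlue_commute hj₁ hi₂]
        exact hausdorffDist_triangle hfin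
    _ < GHuDist X Y + GHuDist Y W + ε := by
        rw [hL.hausdorffDist_range_comp, hR.hausdorffDist_range_comp]
        linarith

end GHuDist

structure UltrametricExtension (B : Type) [MetricSpace B] : Type 1 where
  Space : Type
  [metricSpace : MetricSpace Space]
  [isUltrametricDist : IsUltrametricDist Space]
  embed : B → Space
  isometry_embed : Isometry embed

attribute [instance] UltrametricExtension.metricSpace UltrametricExtension.isUltrametricDist

section Chain

variable {A : ℕ → Type} [∀ n, MetricSpace (A n)] [∀ n, Nonempty (A n)]
  {Z : ℕ → Type} [∀ n, MetricSpace (Z n)] [∀ n, IsUltrametricDist (Z n)]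
  {i : ∀ n, A n → Z n} {j : ∀ n, A (n + 1) → Z n} (hi : ∀ n, Isometry (i n))
  (hj : ∀ n, Isometry (j n))

/-- `Z 0, …, Z n` glued successively, `Z k` to `Z (k + 1)` along the copies `j k` and `i (k + 1)`
of `A (k + 1)`; it extends the copy `j n` of `A (n + 1)`. -/
def ultraAmalgam : ∀ n, UltrametricExtension (A (n + 1))
  | 0 => ⟨Z 0, j 0, hj 0⟩
  | n + 1 =>
    ⟨UltraGlueSpace (ultraAmalgam n).isometry_embed (hi (n + 1)),
      toUltraGlueR (ultraAmalgam n).isometry_embed (hi (n + 1)) ∘ j (n + 1),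
      (toUltraGlueR_isometry _ _).comp (hj (n + 1))⟩

def ultraAmalgamBase : ∀ n, A n → (ultraAmalgam hi hj n).Space
  | 0 => i 0
  | n + 1 => toUltraGlueR (ultraAmalgam hi hj n).isometry_embed (hi (n + 1)) ∘ i (n + 1)

def ultraAmalgamInclusion (n : ℕ) :
    (ultraAmalgam hi hj n).Space → (ultraAmalgam hi hj (n + 1)).Space :=
  toUltraGlueL (ultraAmalgam hi hj n).isometry_embed (hi (n + 1))

theorem ultraAmalgamInclusion_isometry (n : ℕ) : Isometry (ultraAmalgamInclusion hi hj n) :=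
  toUltraGlueL_isometry _ _

theorem ultraAmalgamBase_isometry : ∀ n, Isometry (ultraAmalgamBase hi hj n)
  | 0 => hi 0
  | _ + 1 => (toUltraGlueR_isometry _ _).comp (hi _)

theorem ultraAmalgamInclusion_comp_embed (n : ℕ) :
    ultraAmalgamInclusion hi hj n ∘ (ultraAmalgam hi hj n).embed =
      ultraAmalgamBase hi hj (n + 1) :=
  toUltraGlue_commute _ _

theorem hausdorffDist_ultraAmalgamBase_embed : ∀ n,
    hausdorffDist (range (ultraAmalgamBase hi hj n)) (range (ultraAmalgam hi hj n).embed) =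
      hausdorffDist (range (i n)) (range (j n))
  | 0 => rfl
  | _ + 1 => (toUltraGlueR_isometry _ _).hausdorffDist_range_comp _ _

end Chain

theorem exists_completeSpace_isometry_hausdorffDist_eq {A : ℕ → Type} [∀ n, MetricSpace (A n)]
    [∀ n, Nonempty (A n)] {Z : ℕ → Type} [∀ n, MetricSpace (Z n)] [∀ n, IsUltrametricDist (Z n)]
    {i : ∀ n, A n → Z n} {j : ∀ n, A (n + 1) → Z n} (hi : ∀ n, Isometry (i n))
    (hj : ∀ n, Isometry (j n)) :
    ∃ (W : Type) (_ : MetricSpace W), IsUltrametricDist W ∧ CompleteSpace W ∧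
      ∃ g : ∀ n, A n → W, (∀ n, Isometry (g n)) ∧
        ∀ n, hausdorffDist (range (g n)) (range (g (n + 1))) =
          hausdorffDist (range (i n)) (range (j n)) := by
  let I := ultraAmalgamInclusion_isometry hi hj
  let Φ n : (ultraAmalgam hi hj n).Space → UniformSpace.Completion (InductiveLimit I) :=
    (↑) ∘ toInductiveLimit I n
  have hΦ n : Isometry (Φ n) :=
    UniformSpace.Completion.coe_isometry.comp (toInductiveLimit_isometry I n)
  have hΦ_succ n : Φ (n + 1) ∘ ultraAmalgamInclusion hi hj n = Φ n := by
    simp only [Φ, Function.comp_assoc, toInductiveLimit_commute I n]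
  refine ⟨_, inferInstance, inferInstance, inferInstance, fun n => Φ n ∘ ultraAmalgamBase hi hj n,
    fun n => (hΦ n).comp (ultraAmalgamBase_isometry hi hj n), fun n => ?_⟩
  dsimp only
  rw [← ultraAmalgamInclusion_comp_embed, ← Function.comp_assoc, hΦ_succ,
    (hΦ n).hausdorffDist_range_comp, hausdorffDist_ultraAmalgamBase_embed]

theorem exists_tendsto_GHuDist_of_hausdorffDist_le {W : Type} [MetricSpace W] [CompleteSpace W]
    [IsUltrametricDist W] {A : ℕ → Type} [∀ n, MetricSpace (A n)] [∀ n, CompactSpace (A n)]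
    [∀ n, Nonempty (A n)] {g : ∀ n, A n → W} (hg : ∀ n, Isometry (g n)) {d : ℕ → ℝ}
    (hd : Summable d) (hgd : ∀ n, hausdorffDist (range (g n)) (range (g (n + 1))) ≤ d n) :
    ∃ K : NonemptyCompacts W, Tendsto (fun n => GHuDist (A n) K) atTop (𝓝 0) := by
  let s n : NonemptyCompacts W :=
    ⟨⟨range (g n), isCompact_range (hg n).continuous⟩, range_nonempty _⟩
  have hs : CauchySeq s := cauchySeq_of_dist_le_of_summable d (fun n => by
    rw [NonemptyCompacts.dist_eq]; exact hgd n) hd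
  obtain ⟨K, hK⟩ := cauchySeq_tendsto_of_complete hs
  refine ⟨K, squeeze_zero (fun n => GHuDist_nonneg _ _) (fun n => ?_)
    (tendsto_iff_dist_tendsto_zero.1 hK)⟩
  have := GHuDist_le_hausdorffDist (hg n) (isometry_subtype_coe (s := (K : Set W)))
  rw [Subtype.range_coe] at this
  exact this.trans_eq (NonemptyCompacts.dist_eq (x := s n) (y := K)).symm

theorem exists_strictMono_forall_lt_of_cauchy {e : ℕ → ℕ → ℝ}
    (he : ∀ ε : ℝ, 0 < ε → ∃ N : ℕ, ∀ i ≥ N, ∀ j ≥ N, e i j < ε) {d : ℕ → ℝ}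
    (hd : ∀ n, 0 < d n) : ∃ u : ℕ → ℕ, StrictMono u ∧ ∀ n, e (u n) (u (n + 1)) < d n := by
  choose N hN using fun n => he (d n) (hd n)
  obtain ⟨u, hu, huN⟩ := extraction_forall_of_eventually fun n => eventually_ge_atTop (N n)
  exact ⟨u, hu, fun n => hN n _ (huN n) _ ((huN n).trans (hu (Nat.lt_succ_self n)).le)⟩

theorem tendsto_zero_of_cauchy_of_subseq {e : ℕ → ℕ → ℝ}
    (he : ∀ ε : ℝ, 0 < ε → ∃ N : ℕ, ∀ i ≥ N, ∀ j ≥ N, e i j < ε) {D : ℕ → ℝ}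
    (hD : ∀ i j, D i ≤ e i j + D j) (hD₀ : ∀ i, 0 ≤ D i) {u : ℕ → ℕ}
    (hu : Tendsto u atTop atTop) (hDu : Tendsto (D ∘ u) atTop (𝓝 0)) :
    Tendsto D atTop (𝓝 0) := by
  refine Metric.tendsto_atTop.2 fun ε hε => ?_
  obtain ⟨N, hN⟩ := he (ε / 2) (half_pos hε)
  obtain ⟨k, hkN, hk⟩ := ((hu.eventually_ge_atTop N).and
    (hDu.eventually (gt_mem_nhds (half_pos hε)))).exists
  refine ⟨N, fun n hn => ?_⟩
  rw [Real.dist_0_eq_abs, abs_of_nonneg (hD₀ n)]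
  linarith [hD n (u k), hN n hn (u k) hkN, show D (u k) < ε / 2 from hk]

end

/-- Completeness of the space of compact ultrametric spaces with the ultrametric
Gromov–Hausdorff distance: every Cauchy sequence converges. -/
theorem GHu_complete (X : ℕ → Type) (m : ∀ n, MetricSpace (X n))
    (hc : ∀ n, letI := m n; CompactSpace (X n)) (hne : ∀ n, Nonempty (X n))
    (hu : ∀ n, letI := m n; IsUltrametricDist (X n))
    (hcauchy : ∀ ε : ℝ, 0 < ε → ∃ N : ℕ, ∀ i ≥ N, ∀ j ≥ N,
      (letI := m i; letI := m j; GHuDist (X i) (X j)) < ε) :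
    ∃ (L : Type) (_ : MetricSpace L), CompactSpace L ∧ Nonempty L ∧ IsUltrametricDist L ∧
      Tendsto (fun n => letI := m n; GHuDist (X n) L) atTop (nhds 0) := by
  have (n : ℕ) : CompactSpace (X n) := hc n
  have (n : ℕ) : IsUltrametricDist (X n) := hu n
  obtain ⟨u, hu_mono, hu_lt⟩ := exists_strictMono_forall_lt_of_cauchy
    (e := fun i j => GHuDist (X i) (X j)) hcauchy fun n => pow_pos one_half_pos n
  choose Z _ _ i j hi hj hij using fun n => exists_hausdorffDist_lt_of_GHuDist_lt (hu_lt n)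
  obtain ⟨W, _, _, _, g, hg, hgd⟩ := exists_completeSpace_isometry_hausdorffDist_eq hi hj
  obtain ⟨K, hK⟩ := exists_tendsto_GHuDist_of_hausdorffDist_le hg summable_geometric_two
    fun n => (hgd n).trans_le (hij n).le
  exact ⟨K, inferInstance, inferInstance, inferInstance, inferInstance,
    tendsto_zero_of_cauchy_of_subseq hcauchy (fun _ _ => GHuDist_triangle)
      (fun _ => GHuDist_nonneg _ _) hu_mono.tendsto_atTop hK⟩
end
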